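/- Let n be a natural number, U a subset of {1,…,n} with L = |U| + 1, and let Γ be the n×n real diagonal matrix with diagonal entries Γ_r satisfying: Γ_r = 1 for every r ∉ U, while the entries {Γ_r : r ∈ U} are pairwise distinct, nonzero, and different from 1. Let W ∈ ℝⁿ be the all-ones vector. Then every vector x ∈ ℝⁿ that is constant on the complement of U (i.e. there is c ∈ ℝ with x_r = c for all r ∉ U) lies in the real linear span of { Γ^j W : 1 ≤ j ≤ L }. -/

import Mathlib

/-!
A vector `x` that depends only on the value of `g` is `f ∘ g` for a function `f` on the finitely
many values of `g`, and Lagrange interpolation realises `f` on these values by a polynomial of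
degree `< L`; evaluating it coordinatewise at `g` writes `x` as a combination of the powers
`g ^ k = Γ ^ k W`, `k < L`. The powers `1, …, L` are reached by interpolating `x / g` instead.
Off `U` the values of `g` all equal `1` and `x` is constant, while on `U` the values of `g` are
distinct and different from `1`, so `x` depends only on `g`.
-/

open Polynomial

theorem mem_span_pow_of_factorsThrough {ι K : Type*} [Field K] {g v : ι → K} {s : Finset K}
    (hgs : ∀ i, g i ∈ s) (hv : v.FactorsThrough g) :
    v ∈ Submodule.span K ((g ^ ·) '' Set.Iio s.card) := by
  classical
  set p := Lagrange.interpolate s id (Function.extend g v 0)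
  have hp : aeval g p = v := by
    ext i
    rw [aeval_pi_apply₂, coe_aeval_eq_eval, ← hv.extend_apply 0]
    exact Lagrange.eval_interpolate_at_node _ (Set.injOn_id _) (hgs i)
  rw [← hp, aeval_eq_sum_range]
  refine Submodule.sum_mem _ fun k _ => ?_
  by_cases hk : k < s.card
  · exact Submodule.smul_mem _ _ (Submodule.subset_span ⟨k, hk, rfl⟩)
  · rw [coeff_eq_zero_of_degree_lt, zero_smul]
    · exact Submodule.zero_mem _
    exact (Lagrange.degree_interpolate_lt _ (Set.injOn_id _)).trans_le
      (by exact_mod_cast not_lt.1 hk)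

theorem mem_span_pow_succ_of_factorsThrough {ι K : Type*} [Field K] {g v : ι → K}
    {s : Finset K} (hgs : ∀ i, g i ∈ s) (hg : ∀ i, g i ≠ 0) (hv : v.FactorsThrough g) :
    v ∈ Submodule.span K ((fun k => g ^ (k + 1)) '' Set.Iio s.card) := by
  have hvg : (v / g).FactorsThrough g := fun i j hij => by
    simp only [Pi.div_apply, hv hij, hij]
  have hmul := Submodule.mem_map_of_mem (f := LinearMap.mulLeft K g)
    (mem_span_pow_of_factorsThrough hgs hvg)
  simp_rw [Submodule.map_span, Set.image_image, LinearMap.mulLeft_apply, ← pow_succ'] at hmul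
  rwa [show g * (v / g) = v from funext fun i => mul_div_cancel₀ _ (hg i)] at hmul

theorem diagonal_pow_mulVec_one {n R : Type*} [Fintype n] [DecidableEq n] [CommSemiring R]
    (g : n → R) (j : ℕ) : (Matrix.diagonal g ^ j).mulVec (fun _ => 1) = g ^ j := by
  ext r
  simp [Matrix.diagonal_pow, Matrix.mulVec_diagonal]

/-- Algebraic core of Lemma 5: if `Γ = diag g` with `g r = 1` off `U` and the
values `{g r : r ∈ U}` pairwise distinct, nonzero and ≠ 1, then every vector
constant on the complement of `U` lies in the span of `{Γ^j W : 1 ≤ j ≤ L}`,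
where `W` is the all-ones vector and `L = |U| + 1`. -/
theorem stmt_14 (n : ℕ) (U : Finset (Fin n)) (L : ℕ) (hL : L = U.card + 1)
    (g : Fin n → ℝ)
    (hg1 : ∀ r ∉ U, g r = 1)
    (hgdist : ∀ r ∈ U, ∀ s ∈ U, r ≠ s → g r ≠ g s)
    (hg0 : ∀ r ∈ U, g r ≠ 0)
    (hgne1 : ∀ r ∈ U, g r ≠ 1)
    (W : Fin n → ℝ) (hW : W = fun _ => (1 : ℝ)) :
    ∀ x : Fin n → ℝ, (∃ c : ℝ, ∀ r ∉ U, x r = c) →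
      x ∈ Submodule.span ℝ
        {v : Fin n → ℝ | ∃ j : ℕ, 1 ≤ j ∧ j ≤ L ∧
          v = ((Matrix.diagonal g) ^ j).mulVec W} := by
  rintro x ⟨c, hc⟩
  subst hL hW
  classical
  set s := insert 1 (U.image g)
  have hcard : s.card = U.card + 1 := by
    rw [Finset.card_insert_of_notMem, Finset.card_image_of_injOn]
    · exact fun r hr t ht hrt => by_contra fun h => hgdist r hr t ht h hrt
    · simpa using hgne1
  have hgs : ∀ r, g r ∈ s := fun r => by
    by_cases hr : r ∈ U
    · exact Finset.mem_insert_of_mem (Finset.mem_image_of_mem g hr)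
    · simp [s, hg1 r hr]
  have hg : ∀ r, g r ≠ 0 := fun r => by
    by_cases hr : r ∈ U
    · exact hg0 r hr
    · simp [hg1 r hr]
  have hx : x.FactorsThrough g := fun r t hrt => by
    by_cases hr : r ∈ U <;> by_cases ht : t ∈ U
    · exact by_contra fun h => hgdist r hr t ht (fun hrt' => h (congrArg x hrt')) hrt
    · exact absurd (hrt.trans (hg1 t ht)) (hgne1 r hr)
    · exact absurd (hrt.symm.trans (hg1 r hr)) (hgne1 t ht)
    · rw [hc r hr, hc t ht]
  refine Submodule.span_mono ?_ (mem_span_pow_succ_of_factorsThrough hgs hg hx)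
  rintro _ ⟨k, hk, rfl⟩
  exact ⟨k + 1, by omega, by simpa [hcard] using hk, (diagonal_pow_mulVec_one g _).symm⟩
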